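/- arXiv:2605.16378 — 3 statements merged into one kernel-verified Lean document; each statement's English description precedes it below -/
import Mathlib

section
/- Let u, v : V → ℝ be two score vectors on a finite set V and let σ(u), σ(v) be the corresponding softmax distributions, σ(u)(a) = exp(u_a)/Σ_b exp(u_b). Then the total variation distance satisfies ‖σ(u) − σ(v)‖_TV ≤ (1/4)·(max_{a∈V}(u_a − v_a) − min_{a∈V}(u_a − v_a)). -/
/-! Write `σ(u)` as the tilt of `p = σ(v)` by `X = exp (u - v)`, which takes values in
`[A, B] = [exp m, exp M]`: `σ(u)_a = p_a X_a / E` with `E` the `p`-mean of `X`, so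
`2 TV = E⁻¹ ∑ p_a |X_a - E|`. Comparing `|X - E|` with its chord over `[A, B]` bounds this mean
absolute deviation by `2 (E - A) (B - E) / (B - A)`, and AM-GM gives
`(E - A) (B - E) ≤ E (√B - √A)²`. Hence `TV ≤ (√B - √A) / (√B + √A) = tanh ((M - m) / 4)`,
and `tanh x ≤ x` for `x ≥ 0`. -/

open Finset

/-- The softmax distribution of a score vector `u : V → ℝ`. -/
noncomputable def softmax {V : Type*} [Fintype V] (u : V → ℝ) (a : V) : ℝ :=
  Real.exp (u a) / ∑ b : V, Real.exp (u b)

/-- Total variation distance between two functions on a finite set. -/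
noncomputable def tvDist {V : Type*} [Fintype V] (ν ν' : V → ℝ) : ℝ :=
  (1 / 2) * ∑ a : V, |ν a - ν' a|

namespace Real

theorem tanh_le_self {x : ℝ} (hx : 0 ≤ x) : tanh x ≤ x := by
  rcases hx.eq_or_lt with rfl | hx
  · simp
  obtain ⟨c, hc, hslope⟩ := exists_hasDerivAt_eq_slope sinh cosh hx
    continuous_sinh.continuousOn fun y _ => hasDerivAt_sinh y
  have hcosh : cosh c ≤ cosh x := cosh_le_cosh.mpr <| by
    rw [abs_of_pos hc.1, abs_of_pos hx]; exact hc.2.le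
  rw [sinh_zero, sub_zero, sub_zero] at hslope
  rw [tanh_eq_sinh_div_cosh, div_le_iff₀ (cosh_pos x)]
  nlinarith [(eq_div_iff hx.ne').mp hslope]

theorem tanh_half_sub_eq (x y : ℝ) : tanh ((y - x) / 2) = (exp y - exp x) / (exp y + exp x) := by
  have hy : exp y = exp ((x + y) / 2) * exp ((y - x) / 2) := by rw [← exp_add]; ring_nf
  have hx : exp x = exp ((x + y) / 2) * exp (-((y - x) / 2)) := by rw [← exp_add]; ring_nf
  rw [tanh_eq_sinh_div_cosh, sinh_eq, cosh_eq, hy, hx, ← mul_sub, ← mul_add,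
    mul_div_mul_left _ _ (exp_pos _).ne', div_div_div_cancel_right₀ two_ne_zero]

end Real

theorem Finset.inf'_le_sup' {ι α : Type*} [Lattice α] {s : Finset ι} (H : s.Nonempty)
    (f : ι → α) : s.inf' H f ≤ s.sup' H f := by
  obtain ⟨i, hi⟩ := H
  exact (inf'_le f hi).trans (le_sup' f hi)

theorem sub_mul_abs_sub_le_of_mem_Icc {A B X E : ℝ} (hX : X ∈ Set.Icc A B)
    (hE : E ∈ Set.Icc A B) :
    (B - A) * |X - E| ≤ (E - A) * (B - X) + (B - E) * (X - A) := by
  obtain ⟨hAX, hXB⟩ := hX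
  obtain ⟨hAE, hEB⟩ := hE
  rcases le_total X E with h | h
  · rw [abs_of_nonpos (by linarith)]; nlinarith
  · rw [abs_of_nonneg (by linarith)]; nlinarith

section WeightedMean

variable {ι : Type*} {s : Finset ι} {p X : ι → ℝ}

theorem sub_mul_sum_mul_abs_sub_le {A B : ℝ} (hp : ∀ i ∈ s, 0 ≤ p i) (hp1 : ∑ i ∈ s, p i = 1)
    (hX : ∀ i ∈ s, X i ∈ Set.Icc A B) :
    (B - A) * ∑ i ∈ s, p i * |X i - ∑ j ∈ s, p j * X j| ≤
      2 * (∑ j ∈ s, p j * X j - A) * (B - ∑ j ∈ s, p j * X j) := by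
  set E := ∑ j ∈ s, p j * X j
  have hE : E ∈ Set.Icc A B := (convex_Icc A B).sum_mem hp hp1 hX
  calc (B - A) * ∑ i ∈ s, p i * |X i - E|
      = ∑ i ∈ s, p i * ((B - A) * |X i - E|) := by
        rw [mul_sum]; exact sum_congr rfl fun i _ => by ring
    _ ≤ ∑ i ∈ s, p i * ((E - A) * (B - X i) + (B - E) * (X i - A)) :=
        sum_le_sum fun i hi =>
          mul_le_mul_of_nonneg_left (sub_mul_abs_sub_le_of_mem_Icc (hX i hi) hE) (hp i hi)
    _ = ((E - A) * B - (B - E) * A) * ∑ i ∈ s, p i + (B - E - (E - A)) * E := by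
        simp only [mul_sum, ← sum_add_distrib, E]
        exact sum_congr rfl fun i _ => by ring
    _ = 2 * (E - A) * (B - E) := by rw [hp1]; ring

theorem sum_mul_abs_sub_le_tanh {x y : ℝ} (hxy : x ≤ y) (hp : ∀ i ∈ s, 0 ≤ p i)
    (hp1 : ∑ i ∈ s, p i = 1) (hX : ∀ i ∈ s, X i ∈ Set.Icc (Real.exp x) (Real.exp y)) :
    ∑ i ∈ s, p i * |X i - ∑ j ∈ s, p j * X j| ≤
      2 * (∑ j ∈ s, p j * X j) * Real.tanh ((y - x) / 4) := by
  set E := ∑ j ∈ s, p j * X j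
  rcases hxy.eq_or_lt with rfl | hxy
  · have hXx : ∀ i ∈ s, X i = Real.exp x := fun i hi => by simpa using hX i hi
    have hEx : E = Real.exp x := by
      rw [show E = ∑ j ∈ s, p j * Real.exp x from sum_congr rfl fun j hj => by rw [hXx j hj],
        ← sum_mul, hp1, one_mul]
    simp +contextual [hEx, hXx]
  set a := Real.exp (x / 2)
  set b := Real.exp (y / 2)
  have hsq : ∀ z, Real.exp z = Real.exp (z / 2) ^ 2 := fun z => by rw [← Real.exp_nat_mul]; ring_nf
  have hab : a < b := Real.exp_lt_exp.mpr (by linarith)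
  have hD := sub_mul_sum_mul_abs_sub_le hp hp1 hX
  rw [hsq x, hsq y] at hD
  have hamgm : (E - a ^ 2) * (b ^ 2 - E) ≤ E * (b - a) ^ 2 := by nlinarith [sq_nonneg (E - a * b)]
  rw [show (y - x) / 4 = (y / 2 - x / 2) / 2 by ring, Real.tanh_half_sub_eq,
    mul_div_assoc', le_div_iff₀ (by positivity)]
  refine le_of_mul_le_mul_left ?_ (sub_pos.mpr hab)
  nlinarith

end WeightedMean

section Softmax

variable {V : Type*} [Fintype V]

theorem softmax_pos (u : V → ℝ) (a : V) : 0 < softmax u a :=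
  div_pos (Real.exp_pos _) (sum_pos (fun _ _ => Real.exp_pos _) ⟨a, mem_univ a⟩)

theorem sum_softmax [Nonempty V] (u : V → ℝ) : ∑ a, softmax u a = 1 := by
  simp only [softmax, ← sum_div]
  exact div_self (sum_pos (fun _ _ => Real.exp_pos _) univ_nonempty).ne'

theorem softmax_eq_mul_exp_div (u v : V → ℝ) (a : V) :
    softmax u a = softmax v a * Real.exp (u a - v a) /
      ∑ b, softmax v b * Real.exp (u b - v b) := by
  have hZ : ∀ w : V → ℝ, (∑ b, Real.exp (w b)) ≠ 0 :=
    fun w => (sum_pos (fun _ _ => Real.exp_pos _) ⟨a, mem_univ a⟩).ne'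
  have htilt : ∀ b, softmax v b * Real.exp (u b - v b) = Real.exp (u b) / ∑ c, Real.exp (v c) :=
    fun b => by rw [softmax, Real.exp_sub]; field_simp
  simp only [htilt, ← sum_div]
  rw [ div_div_div_cancel_right₀ (hZ v), softmax]

theorem tvDist_mul_div_self {p X : V → ℝ} {E : ℝ} (hp : ∀ a, 0 ≤ p a) (hE : 0 < E) :
    tvDist (fun a => p a * X a / E) p = (∑ a, p a * |X a - E|) / (2 * E) := by
  have hterm : ∀ a, |p a * X a / E - p a| = p a * |X a - E| / E := fun a => by
    rw [show p a * X a / E - p a = p a * (X a - E) / E by field_simp,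
      abs_div, abs_mul, abs_of_nonneg (hp a), abs_of_pos hE]
  simp only [tvDist, hterm, ← sum_div]
  ring

end Softmax

theorem softmax_tvDist_le_tanh {V : Type*} [Fintype V] [Nonempty V] (u v : V → ℝ) :
    tvDist (softmax u) (softmax v) ≤
      Real.tanh (((Finset.univ.sup' Finset.univ_nonempty fun a => u a - v a) -
          (Finset.univ.inf' Finset.univ_nonempty fun a => u a - v a)) / 4) := by
  set m := Finset.univ.inf' Finset.univ_nonempty fun a => u a - v a
  set M := Finset.univ.sup' Finset.univ_nonempty fun a => u a - v a
  set X := fun a => Real.exp (u a - v a)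
  set E := ∑ a, softmax v a * X a
  have hX : ∀ a ∈ univ, X a ∈ Set.Icc (Real.exp m) (Real.exp M) := fun a ha =>
    ⟨Real.exp_le_exp.mpr (inf'_le _ ha), Real.exp_le_exp.mpr (le_sup' (fun b => u b - v b) ha)⟩
  have hmM : m ≤ M := inf'_le_sup' univ_nonempty _
  have hE : 0 < E := sum_pos (fun a _ => mul_pos (softmax_pos v a) (Real.exp_pos _)) univ_nonempty
  have hsoftmax : softmax u = fun a => softmax v a * X a / E :=
    funext (softmax_eq_mul_exp_div u v)
  rw [hsoftmax, tvDist_mul_div_self (fun a => (softmax_pos v a).le) hE, div_le_iff₀ (by positivity)]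
  calc ∑ a, softmax v a * |X a - E| ≤ 2 * E * Real.tanh ((M - m) / 4) :=
        sum_mul_abs_sub_le_tanh hmM (fun a _ => (softmax_pos v a).le) (sum_softmax v) hX
    _ = _ := by ring

/-- **softmax Lipschitz / TV bound.** For score vectors `u, v : V → ℝ` on a
finite set `V`, `‖σ(u) − σ(v)‖_TV ≤ (1/4)·(max_a (u_a − v_a) − min_a (u_a − v_a))`. -/
theorem softmax_tv_le_quarter_oscillation {V : Type*} [Fintype V] [Nonempty V]
    (u v : V → ℝ) :
    tvDist (softmax u) (softmax v) ≤
      (1 / 4) *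
        ((Finset.univ.sup' Finset.univ_nonempty fun a => u a - v a) -
          (Finset.univ.inf' Finset.univ_nonempty fun a => u a - v a)) := by
  refine (softmax_tvDist_le_tanh u v).trans ?_
  rw [one_div_mul_eq_div]
  exact Real.tanh_le_self (div_nonneg (sub_nonneg.mpr (inf'_le_sup' univ_nonempty _)) (by norm_num))
end

section
/- Let B ⊆ X be a basin satisfying the uniform local margin condition with margin Δ⋆ > 0. Then for every x ∈ B, the one-step escape probability satisfies P_τ(x, B^c) ≤ |V| · exp(−Δ⋆/τ). -/
open Finset

/-- Temperature-scaled conditionals induced by local scores `s`: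
`p_{θ,τ}(a | x_{-i}) = exp(s_i(a; x_{-i})/τ) / Σ_b exp(s_i(b; x_{-i})/τ)`. -/
noncomputable def pTau {V : Type*} [Fintype V] {n : ℕ}
    (s : Fin n → (Fin n → V) → V → ℝ) (τ : ℝ)
    (i : Fin n) (x : Fin n → V) (a : V) : ℝ :=
  Real.exp (s i x a / τ) / ∑ b : V, Real.exp (s i x b / τ)

/-- The Glauber (single-site resampling) kernel on `X = V^n`. -/
noncomputable def glauberKernel {V : Type*} [Fintype V] [DecidableEq V] (n : ℕ)
    (p : Fin n → (Fin n → V) → V → ℝ) (x x' : Fin n → V) : ℝ :=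
  (1 / (n : ℝ)) * ∑ i : Fin n, (if ∀ j, j ≠ i → x j = x' j then p i x (x' i) else 0)

/-- The uniform local margin condition on a basin `B` with margin `Δ⋆`:
for every `x ∈ B` and every site `i` at which some single-site change exits `B`,
`x_i` maximizes `s_i(·; x_{-i})`, and every exit-causing token is beaten by margin `Δ⋆`. -/
def UniformLocalMargin {V : Type*} [Fintype V] [DecidableEq V] {n : ℕ}
    (s : Fin n → (Fin n → V) → V → ℝ) (B : Finset (Fin n → V)) (Δstar : ℝ) : Prop :=
  ∀ x ∈ B, ∀ i : Fin n,
    (∃ a : V, Function.update x i a ∉ B) →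
    (∀ b : V, s i x b ≤ s i x (x i)) ∧
    (∀ a : V, a ≠ x i → Function.update x i a ∉ B → Δstar ≤ s i x (x i) - s i x a)

/-!
Resampling site `i` only reaches the updates `x^{(i→a)}`, so the escape probability is the
average over sites of the conditional mass of the exit-causing tokens. Keeping only the term
of `x_i` in the softmax denominator bounds the weight of such a token `a` by
`exp((s_i(a) - s_i(x_i))/τ) ≤ exp(-Δ⋆/τ)`, and there are at most `|V|` of them.
-/

theorem sum_ite_agree_off_eq_sum_update {ι V β : Type*} [Fintype ι] [DecidableEq ι]
    [Fintype V] [DecidableEq V] [AddCommMonoid β] (S : Finset (ι → V)) (x : ι → V) (i : ι)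
    (f : V → β)
    [DecidablePred fun x' : ι → V => ∀ j, j ≠ i → x j = x' j] :
    ∑ x' ∈ S, (if ∀ j, j ≠ i → x j = x' j then f (x' i) else 0) =
      ∑ a ∈ univ.filter (fun a => Function.update x i a ∈ S), f a := by
  rw [← sum_filter]
  symm
  refine sum_nbij' (Function.update x i) (fun x' => x' i) ?_ ?_ ?_ ?_ ?_ <;>
    simp only [mem_filter, mem_univ, true_and]
  · intro a ha
    exact ⟨ha, fun j hj => (Function.update_of_ne hj a x).symm⟩
  · intro x' ⟨hx', hagree⟩
    rwa [Function.update_eq_iff.mpr ⟨rfl, hagree⟩]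
  · simp
  · intro x' ⟨_, hagree⟩
    exact Function.update_eq_iff.mpr ⟨rfl, hagree⟩
  · simp

theorem sum_glauberKernel_eq {V : Type*} [Fintype V] [DecidableEq V] (n : ℕ)
    (p : Fin n → (Fin n → V) → V → ℝ) (S : Finset (Fin n → V)) (x : Fin n → V) :
    ∑ x' ∈ S, glauberKernel n p x x' =
      (1 / (n : ℝ)) * ∑ i : Fin n,
        ∑ a ∈ univ.filter (fun a => Function.update x i a ∈ S), p i x a := by
  simp only [glauberKernel, ← mul_sum]
  rw [sum_comm]
  simp only [sum_ite_agree_off_eq_sum_update]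

theorem pTau_le_exp_neg_div_of_le_sub {V : Type*} [Fintype V] {n : ℕ}
    (s : Fin n → (Fin n → V) → V → ℝ) {τ Δ : ℝ} (hτ : 0 < τ) (i : Fin n) (x : Fin n → V)
    {a : V} (c : V)
    (hgap : Δ ≤ s i x c - s i x a) :
    pTau s τ i x a ≤ Real.exp (-Δ / τ) :=
  calc pTau s τ i x a ≤ Real.exp (s i x a / τ) / Real.exp (s i x c / τ) := by
        unfold pTau
        gcongr
        exact single_le_sum (f := fun b => Real.exp (s i x b / τ))
          (fun b _ => (Real.exp_pos _).le) (mem_univ c)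
    _ = Real.exp ((s i x a - s i x c) / τ) := by rw [← Real.exp_sub, sub_div]
    _ ≤ Real.exp (-Δ / τ) := by gcongr; linarith

theorem sum_pTau_exit_le {V : Type*} [Fintype V] [DecidableEq V] {n : ℕ}
    {s : Fin n → (Fin n → V) → V → ℝ} {B : Finset (Fin n → V)} {Δ τ : ℝ}
    (hmargin : UniformLocalMargin s B Δ) (hτ : 0 < τ) {x : Fin n → V} (hx : x ∈ B)
    (i : Fin n) :
    ∑ a ∈ univ.filter (fun a => Function.update x i a ∉ B), pTau s τ i x a ≤
      Fintype.card V * Real.exp (-Δ / τ) := by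
  have hterm : ∀ a ∈ univ.filter (fun a => Function.update x i a ∉ B),
      pTau s τ i x a ≤ Real.exp (-Δ / τ) := by
    intro a ha
    rw [mem_filter] at ha
    have hne : a ≠ x i := by
      rintro rfl
      exact ha.2 (by rwa [Function.update_eq_self])
    exact pTau_le_exp_neg_div_of_le_sub s hτ i x (x i)
      ((hmargin x hx i ⟨a, ha.2⟩).2 a hne ha.2)
  calc _ ≤ (univ.filter (fun a => Function.update x i a ∉ B)).card • Real.exp (-Δ / τ) :=
        sum_le_card_nsmul _ _ _ hterm
    _ ≤ Fintype.card V * Real.exp (-Δ / τ) := by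
        rw [nsmul_eq_mul]
        gcongr
        exact_mod_cast card_filter_le _ _

theorem escape_probability_bound_general {V : Type*} [Fintype V] [DecidableEq V]
    (n : ℕ) (hn : 0 < n) (s : Fin n → (Fin n → V) → V → ℝ)
    (τ : ℝ) (hτ : 0 < τ)
    (B : Finset (Fin n → V)) (Δstar : ℝ)
    (hmargin : UniformLocalMargin s B Δstar) :
    ∀ x ∈ B,
      ∑ x' ∈ Finset.univ.filter (fun x' => x' ∉ B), glauberKernel n (pTau s τ) x x'
        ≤ (Fintype.card V : ℝ) * Real.exp (-Δstar / τ) := by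
  intro x hx
  rw [sum_glauberKernel_eq]
  simp only [mem_filter, mem_univ, true_and]
  calc (1 / (n : ℝ)) * ∑ i : Fin n,
        ∑ a ∈ univ.filter (fun a => Function.update x i a ∉ B), pTau s τ i x a
      ≤ (1 / (n : ℝ)) * ∑ _i : Fin n, Fintype.card V * Real.exp (-Δstar / τ) := by
        gcongr with i
        exact sum_pTau_exit_le hmargin hτ hx i
    _ = Fintype.card V * Real.exp (-Δstar / τ) := by
        have : (n : ℝ) ≠ 0 := by positivity
        simp only [sum_const, card_univ, Fintype.card_fin, nsmul_eq_mul]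
        field_simp

/-- **exponentially small escape probability.** If the basin `B` satisfies the
uniform local margin condition with margin `Δ⋆ > 0`, then for every `x ∈ B` the one-step
escape probability satisfies `P_τ(x, Bᶜ) ≤ |V|·exp(−Δ⋆/τ)`. -/
theorem escape_probability_bound {V : Type*} [Fintype V] [DecidableEq V]
    (n : ℕ) (hn : 0 < n) (s : Fin n → (Fin n → V) → V → ℝ)
    (hloc : ∀ (i : Fin n) (x y : Fin n → V), (∀ k, k ≠ i → x k = y k) → s i x = s i y)
    (τ : ℝ) (hτ : 0 < τ)
    (B : Finset (Fin n → V)) (Δstar : ℝ) (hΔ : 0 < Δstar)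
    (hmargin : UniformLocalMargin s B Δstar) :
    ∀ x ∈ B,
      ∑ x' ∈ Finset.univ.filter (fun x' => x' ∉ B), glauberKernel n (pTau s τ) x x'
        ≤ (Fintype.card V : ℝ) * Real.exp (-Δstar / τ) :=
  escape_probability_bound_general n hn s τ hτ B Δstar hmargin
end

section
/- Let B ⊆ X satisfy the uniform local margin condition with margin Δ⋆ > 0, let μ_τ be the stationary distribution of the (irreducible, aperiodic) Glauber chain P_τ, and assume 0 < μ_τ(B) ≤ 1/2. Then the total-variation mixing time satisfies the exponential lower bound t_mix(1/4) ≥ (1/(4|V|)) · exp(Δ⋆/τ). -/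
open Finset

/-- The `t`-step transition probabilities of a kernel `P` (t-fold matrix power). -/
noncomputable def kernelIter {X : Type*} [Fintype X] [DecidableEq X]
    (P : X → X → ℝ) : ℕ → X → X → ℝ
  | 0 => fun x y => if x = y then 1 else 0
  | (t + 1) => fun x y => ∑ z : X, kernelIter P t x z * P z y

/-- The total-variation mixing time
`t_mix(ε) = min { t : sup_x ‖P^t(x,·) − μ‖_TV ≤ ε }`. -/
noncomputable def mixingTime {X : Type*} [Fintype X] [DecidableEq X]
    (P : X → X → ℝ) (μ : X → ℝ) (ε : ℝ) : ℕ :=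
  sInf {t : ℕ | ∀ x : X, tvDist (kernelIter P t x) μ ≤ ε}

/-!
From a configuration `x ∈ B`, a Glauber step can leave `B` only by resampling one site `i` to a
token `a` with `x[i ↦ a] ∉ B`; the margin condition makes the conditional probability of such a
token at most `e^{-Δ⋆/τ}`, so one step exits `B` with probability at most `|V| e^{-Δ⋆/τ}`, and
`t` steps started in `B` exit with probability at most `t |V| e^{-Δ⋆/τ}`. At the mixing time `T`
the law of the chain started in `B` is `1/4`-close to `μ`, which gives mass `≥ 1/2` to `Bᶜ`;
hence `1/4 ≤ T |V| e^{-Δ⋆/τ}`.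

For this to bound the genuine mixing time (and not the junk value `sInf ∅ = 0`), the chain must
actually mix: its `n`-step kernel is entrywise positive, so Doeblin's contraction applies.
-/

open Matrix

section MarkovChain

variable {X : Type*} [Fintype X]

lemma tvDist_vecMul_le {Q : Matrix X X ℝ} (hQ : ∀ x, ∑ y, Q x y = 1) {ε : ℝ}
    (hε : ∀ x y, ε ≤ Q x y) {f g : X → ℝ} (hfg : ∑ x, f x = ∑ x, g x) :
    tvDist (f ᵥ* Q) (g ᵥ* Q) ≤ (1 - Fintype.card X * ε) * tvDist f g := by
  have hcol : ∀ y, |(f ᵥ* Q) y - (g ᵥ* Q) y| ≤ ∑ z, |f z - g z| * (Q z y - ε) := by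
    intro y
    -- subtracting `ε` from every entry does not change the product, as `∑ (f - g) = 0`
    have hshift : ∑ z, (f z - g z) * (Q z y - ε)
        = ∑ z, (f z * Q z y - g z * Q z y) - ∑ z, (f z - g z) * ε := by
      rw [← Finset.sum_sub_distrib]
      exact Finset.sum_congr rfl fun z _ => by ring
    rw [← Finset.sum_mul, Finset.sum_sub_distrib f g, hfg, sub_self, zero_mul, sub_zero,
      Finset.sum_sub_distrib] at hshift
    rw [vecMul, vecMul, dotProduct, dotProduct, ← hshift]
    refine (Finset.abs_sum_le_sum_abs _ _).trans (le_of_eq ?_)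
    simp only [abs_mul, abs_of_nonneg (sub_nonneg.mpr (hε _ y))]
  calc tvDist (f ᵥ* Q) (g ᵥ* Q) ≤ 1 / 2 * ∑ y, ∑ z, |f z - g z| * (Q z y - ε) := by
        unfold tvDist
        gcongr with y
        exact hcol y
    _ = (1 - Fintype.card X * ε) * tvDist f g := by
        rw [Finset.sum_comm]
        simp_rw [← Finset.mul_sum, Finset.sum_sub_distrib, hQ, Finset.sum_const,
          Finset.card_univ, nsmul_eq_mul]
        rw [tvDist, ← Finset.sum_mul]
        ring

variable [DecidableEq X]

lemma kernelIter_eq_pow (P : Matrix X X ℝ) (t : ℕ) : kernelIter P t = P ^ t := by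
  induction t with
  | zero => funext x y; simp [kernelIter, one_apply]
  | succ t ih => funext x y; simp [kernelIter, pow_succ, mul_apply, ih]

lemma vecMul_pow_eq_self {P : Matrix X X ℝ} {μ : X → ℝ} (hμ : μ ᵥ* P = μ) (t : ℕ) :
    μ ᵥ* P ^ t = μ := by
  induction t with
  | zero => simp
  | succ t ih => rw [pow_succ, ← vecMul_vecMul, ih, hμ]

lemma sum_sub_sum_le_tvDist {f g : X → ℝ} (hfg : ∑ x, f x = ∑ x, g x) (E : Finset X) :
    ∑ y ∈ E, g y - ∑ y ∈ E, f y ≤ tvDist f g := by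
  have htot : ∑ y ∈ Eᶜ, (f y - g y) + ∑ y ∈ E, (f y - g y) = 0 := by
    rw [Finset.sum_compl_add_sum, Finset.sum_sub_distrib, hfg, sub_self]
  have hsplit := Finset.sum_compl_add_sum E (fun y => |f y - g y|)
  have hE := Finset.abs_sum_le_sum_abs (fun y => f y - g y) E
  have hEc := Finset.abs_sum_le_sum_abs (fun y => f y - g y) Eᶜ
  rw [tvDist, ← hsplit, ← neg_sub, ← Finset.sum_sub_distrib]
  linarith [neg_abs_le (∑ y ∈ E, (f y - g y)), le_abs_self (∑ y ∈ Eᶜ, (f y - g y))]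

lemma sum_pow_apply_eq_one {P : Matrix X X ℝ} (hP : P ∈ rowStochastic ℝ X) (t : ℕ) (x : X) :
    ∑ y, (P ^ t) x y = 1 :=
  sum_row_of_mem_rowStochastic (pow_mem hP t) x

lemma sum_pow_apply_le_one {P : Matrix X X ℝ} (hP : P ∈ rowStochastic ℝ X) (t : ℕ) (x : X)
    (s : Finset X) : ∑ y ∈ s, (P ^ t) x y ≤ 1 :=
  (Finset.sum_le_sum_of_subset_of_nonneg (Finset.subset_univ s) fun _ _ _ =>
    nonneg_of_mem_rowStochastic (pow_mem hP t)).trans (sum_pow_apply_eq_one hP t x).le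

lemma exists_forall_tvDist_pow_le [Nonempty X] {P : Matrix X X ℝ} (hP : P ∈ rowStochastic ℝ X)
    (hprim : P.IsPrimitive) {μ : X → ℝ} (hμ : μ ᵥ* P = μ) (hμ1 : ∑ x, μ x = 1) {ε : ℝ}
    (hε : 0 < ε) : ∃ t, ∀ x, tvDist ((P ^ t) x) μ ≤ ε := by
  obtain ⟨m, -, hpos⟩ := hprim.exists_pos_pow
  obtain ⟨⟨x₀, y₀⟩, hmin⟩ := Finite.exists_min fun p : X × X => (P ^ m) p.1 p.2
  set c := 1 - Fintype.card X * (P ^ m) x₀ y₀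
  have hc0 : 0 ≤ c := by
    have : ∑ _y : X, (P ^ m) x₀ y₀ ≤ ∑ y, (P ^ m) x₀ y :=
      Finset.sum_le_sum fun y _ => hmin (x₀, y)
    rw [sum_pow_apply_eq_one hP, Finset.sum_const, Finset.card_univ, nsmul_eq_mul] at this
    linarith
  have hc1 : c < 1 := by
    have := mul_pos (Nat.cast_pos.mpr (Fintype.card_pos (α := X))) (hpos x₀ y₀)
    linarith
  have hcontract :
      ∀ k x, tvDist ((P ^ (m * k)) x) μ ≤ c ^ k * tvDist ((1 : Matrix X X ℝ) x) μ := by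
    intro k x
    induction k with
    | zero => simp
    | succ k ih =>
      have hrow : (P ^ (m * (k + 1))) x = (P ^ (m * k)) x ᵥ* P ^ m := by
        rw [mul_add, mul_one, pow_add]; rfl
      calc tvDist ((P ^ (m * (k + 1))) x) μ
          = tvDist ((P ^ (m * k)) x ᵥ* P ^ m) (μ ᵥ* P ^ m) := by
            rw [hrow, vecMul_pow_eq_self hμ]
        _ ≤ c * tvDist ((P ^ (m * k)) x) μ :=
            tvDist_vecMul_le (sum_pow_apply_eq_one hP m) (fun x y => hmin (x, y))
              (by rw [sum_pow_apply_eq_one hP, hμ1])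
        _ ≤ c ^ (k + 1) * tvDist ((1 : Matrix X X ℝ) x) μ := by
            rw [pow_succ', mul_assoc]
            gcongr
  have hsmall : ∀ᶠ k in Filter.atTop, ∀ x, c ^ k * tvDist ((1 : Matrix X X ℝ) x) μ < ε :=
    Filter.eventually_all.2 fun x =>
      Filter.Tendsto.eventually_lt_const (by simpa using hε)
        ((tendsto_pow_atTop_nhds_zero_of_lt_one hc0 hc1).mul_const _)
  obtain ⟨k, hk⟩ := hsmall.exists
  exact ⟨m * k, fun x => (hcontract k x).trans (hk x).le⟩

lemma sum_compl_pow_apply_le {P : Matrix X X ℝ} (hP : P ∈ rowStochastic ℝ X) {B : Finset X}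
    {δ : ℝ} (hesc : ∀ z ∈ B, ∑ y ∈ Bᶜ, P z y ≤ δ) {x : X} (hx : x ∈ B) (t : ℕ) :
    ∑ y ∈ Bᶜ, (P ^ t) x y ≤ t * δ := by
  have hP0 (t : ℕ) (x y : X) : 0 ≤ (P ^ t) x y := nonneg_of_mem_rowStochastic (pow_mem hP t)
  have hδ : 0 ≤ δ := (Finset.sum_nonneg fun y _ => hP0 1 x y).trans (by simpa using hesc x hx)
  induction t with
  | zero => simp [one_apply, hx]
  | succ t ih =>
    calc ∑ y ∈ Bᶜ, (P ^ (t + 1)) x y = ∑ z, (P ^ t) x z * ∑ y ∈ Bᶜ, P z y := by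
          simp only [pow_succ, mul_apply, Finset.mul_sum]
          exact Finset.sum_comm
      _ = ∑ z ∈ Bᶜ, (P ^ t) x z * ∑ y ∈ Bᶜ, P z y + ∑ z ∈ B, (P ^ t) x z * ∑ y ∈ Bᶜ, P z y :=
          (Finset.sum_compl_add_sum B _).symm
      _ ≤ ∑ z ∈ Bᶜ, (P ^ t) x z + ∑ z ∈ B, (P ^ t) x z * δ := by
          gcongr with z _ z hz
          · exact mul_le_of_le_one_right (hP0 t x z)
              (by simpa using sum_pow_apply_le_one hP 1 z Bᶜ)
          · exact hP0 t x z
          · exact hesc z hz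
      _ ≤ t * δ + 1 * δ := by
          rw [← Finset.sum_mul]
          gcongr
          exact sum_pow_apply_le_one hP t x B
      _ = (t + 1 : ℕ) * δ := by push_cast; ring

lemma one_sub_sub_le_mixingTime_mul {P : Matrix X X ℝ} (hP : P ∈ rowStochastic ℝ X)
    {μ : X → ℝ} (hμ1 : ∑ x, μ x = 1) {ε : ℝ} (hmix : ∃ t, ∀ x, tvDist ((P ^ t) x) μ ≤ ε)
    {B : Finset X} (hB : B.Nonempty) {δ : ℝ} (hesc : ∀ z ∈ B, ∑ y ∈ Bᶜ, P z y ≤ δ) :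
    1 - ∑ x ∈ B, μ x - ε ≤ mixingTime P μ ε * δ := by
  obtain ⟨x₀, hx₀⟩ := hB
  obtain ⟨t, ht⟩ := hmix
  set T := mixingTime P μ ε
  have hT : T ∈ {t | ∀ x, tvDist (kernelIter P t x) μ ≤ ε} :=
    Nat.sInf_mem ⟨t, fun x => by simpa only [kernelIter_eq_pow] using ht x⟩
  have hmixed : tvDist ((P ^ T) x₀) μ ≤ ε := by simpa only [kernelIter_eq_pow] using hT x₀
  have hlow := sum_sub_sum_le_tvDist (f := (P ^ T) x₀) (g := μ)
    (by rw [sum_pow_apply_eq_one hP, hμ1]) Bᶜ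
  linarith [Finset.sum_compl_add_sum B μ, sum_compl_pow_apply_le hP hesc hx₀ T]

end MarkovChain

section Glauber

lemma sum_ite_forall_ne_eq_sum_update {ι β M : Type*} [Fintype ι] [DecidableEq ι] [Fintype β]
    [AddCommMonoid M] (x : ι → β) (i : ι) [∀ y : ι → β, Decidable (∀ j, j ≠ i → x j = y j)]
    (g : (ι → β) → M) :
    ∑ y : ι → β, (if ∀ j, j ≠ i → x j = y j then g y else 0) = ∑ a, g (Function.update x i a) := by
  have hfiber : Finset.univ.filter (fun y : ι → β => ∀ j, j ≠ i → x j = y j)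
      = Finset.univ.map ⟨Function.update x i, Function.update_injective x i⟩ := by
    ext y
    simp [Function.update_eq_iff]
  rw [← Finset.sum_filter, hfiber, Finset.sum_map]
  rfl

/-- Positivity spreads one coordinate per step, so after `|ι|` steps it reaches every entry. -/
lemma isPrimitive_of_single_site_pos {ι β : Type*} [Fintype ι] [DecidableEq ι] [Nonempty ι]
    [Fintype β] [DecidableEq β] {P : Matrix (ι → β) (ι → β) ℝ} (hP0 : ∀ x y, 0 ≤ P x y)
    (hP : ∀ i x y, (∀ j, j ≠ i → x j = y j) → 0 < P x y) : P.IsPrimitive := by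
  refine ⟨hP0, Fintype.card ι, Fintype.card_pos, fun x y => ?_⟩
  suffices h : ∀ S : Finset ι, ∀ y, (∀ j ∉ S, x j = y j) → 0 < (P ^ S.card) x y by
    simpa using h Finset.univ y
  intro S
  induction S using Finset.induction_on with
  | empty =>
    intro y hxy
    obtain rfl : x = y := funext fun j => hxy j (Finset.notMem_empty j)
    simp
  | insert i S hi ih =>
    intro y hxy
    set z := Function.update y i (x i)
    have hxz : ∀ j ∉ S, x j = z j := by
      intro j hj
      by_cases hji : j = i
      · subst hji; simp [z]
      · simpa [z, hji] using hxy j (by simp [hji, hj])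
    rw [Finset.card_insert_of_notMem hi, pow_succ, mul_apply]
    refine lt_of_lt_of_le ?_ (Finset.single_le_sum (fun w _ =>
      mul_nonneg (pow_apply_nonneg hP0 _ x w) (hP0 w y)) (Finset.mem_univ z))
    exact mul_pos (ih z hxz) (hP i z y fun j hj => Function.update_of_ne hj _ _)

variable {V : Type*} [Fintype V] [DecidableEq V] {n : ℕ}

lemma glauberKernel_mem_rowStochastic (hn : 0 < n) {p : Fin n → (Fin n → V) → V → ℝ}
    (hp0 : ∀ i x a, 0 ≤ p i x a) (hp1 : ∀ i x, ∑ a, p i x a = 1) :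
    glauberKernel n p ∈ rowStochastic ℝ (Fin n → V) := by
  refine mem_rowStochastic_iff_sum.2 ⟨fun x y => ?_, fun x => ?_⟩
  · unfold glauberKernel
    refine mul_nonneg (by positivity) (Finset.sum_nonneg fun i _ => ?_)
    split_ifs
    exacts [hp0 _ _ _, le_rfl]
  · unfold glauberKernel
    rw [← Finset.mul_sum, Finset.sum_comm]
    have hsite : ∀ i,
        ∑ y : Fin n → V, (if ∀ j, j ≠ i → x j = y j then p i x (y i) else 0) = 1 := fun i =>
      (sum_ite_forall_ne_eq_sum_update x i fun y => p i x (y i)).trans (by simp [hp1])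
    simp only [hsite, Finset.sum_const, Finset.card_univ, Fintype.card_fin, nsmul_eq_mul, mul_one]
    field_simp

lemma glauberKernel_pos {p : Fin n → (Fin n → V) → V → ℝ} (hp0 : ∀ i x a, 0 ≤ p i x a)
    (hp : ∀ i x a, 0 < p i x a) (i : Fin n) {x y : Fin n → V}
    (hxy : ∀ j, j ≠ i → x j = y j) : 0 < glauberKernel n p x y := by
  have : 0 < n := i.pos
  unfold glauberKernel
  refine mul_pos (by positivity) (Finset.sum_pos' (fun k _ => ?_) ⟨i, Finset.mem_univ i, ?_⟩)
  · split_ifs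
    exacts [hp0 _ _ _, le_rfl]
  · rw [if_pos hxy]
    exact hp i x (y i)

lemma sum_compl_glauberKernel_le (hn : 0 < n) {p : Fin n → (Fin n → V) → V → ℝ}
    {B : Finset (Fin n → V)} {x : Fin n → V} {δ : ℝ} (hδ : 0 ≤ δ)
    (hexit : ∀ i a, Function.update x i a ∉ B → p i x a ≤ δ) :
    ∑ y ∈ Bᶜ, glauberKernel n p x y ≤ Fintype.card V * δ := by
  have hsite : ∀ i, ∑ y ∈ Bᶜ, (if ∀ j, j ≠ i → x j = y j then p i x (y i) else 0)
      ≤ Fintype.card V * δ := by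
    intro i
    calc ∑ y ∈ Bᶜ, (if ∀ j, j ≠ i → x j = y j then p i x (y i) else 0)
        ≤ ∑ y ∈ Bᶜ, (if ∀ j, j ≠ i → x j = y j then δ else 0) := by
          refine Finset.sum_le_sum fun y hy => ?_
          split_ifs with hxy
          · refine hexit i (y i) ?_
            rwa [(Function.update_eq_iff.2 ⟨rfl, hxy⟩ : Function.update x i (y i) = y),
              ← Finset.mem_compl]
          · exact le_rfl
      _ ≤ ∑ y : Fin n → V, (if ∀ j, j ≠ i → x j = y j then δ else 0) :=
          Finset.sum_le_sum_of_subset_of_nonneg (Finset.subset_univ _) fun y _ _ => by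
            split_ifs
            exacts [hδ, le_rfl]
      _ = Fintype.card V * δ := by
          rw [sum_ite_forall_ne_eq_sum_update x i fun _ => δ]
          simp
  calc ∑ y ∈ Bᶜ, glauberKernel n p x y
      = 1 / n * ∑ i, ∑ y ∈ Bᶜ, (if ∀ j, j ≠ i → x j = y j then p i x (y i) else 0) := by
        simp only [glauberKernel, ← Finset.mul_sum]
        rw [Finset.sum_comm]
    _ ≤ 1 / n * ∑ _i : Fin n, (Fintype.card V * δ) := by gcongr with i; exact hsite i
    _ = Fintype.card V * δ := by
        rw [Finset.sum_const, Finset.card_univ, Fintype.card_fin, nsmul_eq_mul]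
        field_simp

end Glauber

section TemperatureScaled

variable {V : Type*} [Fintype V] {n : ℕ} (s : Fin n → (Fin n → V) → V → ℝ) (τ : ℝ)

lemma pTau_pos (i : Fin n) (x : Fin n → V) (a : V) : 0 < pTau s τ i x a :=
  div_pos (Real.exp_pos _) (Finset.sum_pos (fun _ _ => Real.exp_pos _) ⟨a, Finset.mem_univ a⟩)

lemma sum_pTau [Nonempty V] (i : Fin n) (x : Fin n → V) : ∑ a, pTau s τ i x a = 1 := by
  simp only [pTau, ← Finset.sum_div]
  exact div_self (Finset.sum_pos (fun _ _ => Real.exp_pos _) Finset.univ_nonempty).ne'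

variable {s τ}

lemma pTau_le_exp_neg_of_margin [DecidableEq V] (hτ : 0 < τ) {B : Finset (Fin n → V)}
    {Δstar : ℝ} (hmargin : UniformLocalMargin s B Δstar) {x : Fin n → V} (hx : x ∈ B)
    {i : Fin n} {a : V} (ha : Function.update x i a ∉ B) :
    pTau s τ i x a ≤ Real.exp (-(Δstar / τ)) := by
  obtain ⟨-, hgap⟩ := hmargin x hx i ⟨a, ha⟩
  have hax : a ≠ x i := by
    rintro rfl
    exact ha (by rwa [Function.update_eq_self])
  have hdenom : Real.exp (s i x (x i) / τ) ≤ ∑ b, Real.exp (s i x b / τ) :=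
    Finset.single_le_sum (f := fun b => Real.exp (s i x b / τ)) (fun _ _ => (Real.exp_pos _).le)
      (Finset.mem_univ _)
  calc pTau s τ i x a ≤ Real.exp (s i x a / τ) / Real.exp (s i x (x i) / τ) :=
        div_le_div_of_nonneg_left (Real.exp_pos _).le (Real.exp_pos _) hdenom
    _ = Real.exp (-((s i x (x i) - s i x a) / τ)) := by rw [← Real.exp_sub]; ring_nf
    _ ≤ Real.exp (-(Δstar / τ)) := by
        gcongr
        exact hgap a hax ha

end TemperatureScaled

theorem mixing_time_exponential_lower_bound_general {V : Type*} [Fintype V] [DecidableEq V]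
    [Nonempty V]
    (n : ℕ) (hn : 0 < n) (s : Fin n → (Fin n → V) → V → ℝ)
    (τ : ℝ) (hτ : 0 < τ)
    (B : Finset (Fin n → V)) (Δstar : ℝ)
    (hmargin : UniformLocalMargin s B Δstar)
    (μ : (Fin n → V) → ℝ)
    (hμ1 : ∑ x : Fin n → V, μ x = 1)
    (hμstat : ∀ y : Fin n → V,
      ∑ x : Fin n → V, μ x * glauberKernel n (pTau s τ) x y = μ y)
    (hμBpos : 0 < ∑ x ∈ B, μ x) (hμBhalf : ∑ x ∈ B, μ x ≤ 1 / 2) :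
    (1 / (4 * (Fintype.card V : ℝ))) * Real.exp (Δstar / τ)
      ≤ (mixingTime (glauberKernel n (pTau s τ)) μ (1 / 4) : ℝ) := by
  have hp0 i x a := (pTau_pos s τ i x a).le
  have hP := glauberKernel_mem_rowStochastic hn hp0 (sum_pTau s τ)
  have : Nonempty (Fin n) := ⟨⟨0, hn⟩⟩
  have hprim : IsPrimitive (glauberKernel n (pTau s τ)) :=
    isPrimitive_of_single_site_pos (fun _ _ => nonneg_of_mem_rowStochastic hP)
      fun i _ _ hxy => glauberKernel_pos hp0 (pTau_pos s τ) i hxy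
  have hmix := exists_forall_tvDist_pow_le hP hprim (funext hμstat) hμ1
    (by norm_num : (0 : ℝ) < 1 / 4)
  have hbound := one_sub_sub_le_mixingTime_mul hP hμ1 hmix
    (Finset.nonempty_of_sum_ne_zero hμBpos.ne') fun x hx =>
      sum_compl_glauberKernel_le hn (Real.exp_pos _).le fun _ _ ha =>
        pTau_le_exp_neg_of_margin hτ hmargin hx ha
  rw [Real.exp_neg, ← div_eq_mul_inv, mul_div_assoc', le_div_iff₀ (Real.exp_pos _)] at hbound
  rw [div_mul_eq_mul_div, one_mul, div_le_iff₀ (by positivity)]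
  nlinarith [Real.exp_pos (Δstar / τ)]

/-- **exponential lower bound on mixing time.** Let `B` satisfy the uniform
local margin condition with margin `Δ⋆ > 0`, let `μ` be the stationary distribution of the
Glauber chain for the strictly positive temperature-scaled conditionals, and assume
`0 < μ(B) ≤ 1/2`. Then `t_mix(1/4) ≥ (1/(4|V|))·exp(Δ⋆/τ)`. -/
theorem mixing_time_exponential_lower_bound {V : Type*} [Fintype V] [DecidableEq V]
    [Nonempty V]
    (n : ℕ) (hn : 0 < n) (s : Fin n → (Fin n → V) → V → ℝ)
    (hloc : ∀ (i : Fin n) (x y : Fin n → V), (∀ k, k ≠ i → x k = y k) → s i x = s i y)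
    (τ : ℝ) (hτ : 0 < τ)
    (B : Finset (Fin n → V)) (Δstar : ℝ) (hΔ : 0 < Δstar)
    (hmargin : UniformLocalMargin s B Δstar)
    (μ : (Fin n → V) → ℝ)
    (hμ0 : ∀ x, 0 ≤ μ x) (hμ1 : ∑ x : Fin n → V, μ x = 1)
    (hμstat : ∀ y : Fin n → V,
      ∑ x : Fin n → V, μ x * glauberKernel n (pTau s τ) x y = μ y)
    (hμBpos : 0 < ∑ x ∈ B, μ x) (hμBhalf : ∑ x ∈ B, μ x ≤ 1 / 2) :
    (1 / (4 * (Fintype.card V : ℝ))) * Real.exp (Δstar / τ)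
      ≤ (mixingTime (glauberKernel n (pTau s τ)) μ (1 / 4) : ℝ) :=
  mixing_time_exponential_lower_bound_general n hn s τ hτ B Δstar hmargin μ hμ1 hμstat hμBpos
    hμBhalf
end
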